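/- Invariance of the fundamental invariants Δ₁₁–Δ₁₃ of K²(E³): for all 3×3 real matrices A, B, C with A and C symmetric, all λ ∈ SO(3) and all δ ∈ ℝ³, with (Ã, B̃, C̃) the transformed parameters, each of the following quantities takes the same value on (Ã, B̃, C̃) as on (A, B, C): Δ₁₁ = ε_{iℓm} ε_{jkp} B_{ij} B_{kℓ} C_{mn} C_{np} + B_{ij}[B_{ij} C_{kℓ}C_{kℓ} − C_{jk}(C_{kℓ}B_{iℓ} + 4 C_{[k}{}^{ℓ} B_{ℓ]i})] + A_{ij}C_{ij} C_k{}^{[k} C_ℓ{}^{ℓ]}; Δ₁₂ = A_{ii}[(C_{jj}C_{kk} + 3 C_{jk}C_{jk}) C_{ℓℓ} − 4 C_{jk}C_{kℓ}C_{ℓj}] − 6 A_{ij}C_{ij} C_{kℓ}C_{kℓ} + 6 B_{ij}{B_{ij} C_{kℓ}C_{kℓ} − C_{jk}[(B_{ik} − 2B_{ki}) C_{ℓℓ} + 4 C_{kℓ}B_{ℓi}]} + 12 ε_{iℓm} ε_{jkp} B_{ij} B_{kℓ} C_{mn} C_{np}; Δ₁₃ = A_{ij}(B_{ij} C_k{}^{[k}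 C_ℓ{}^{ℓ]} + B_{jk} C_{kℓ} C_{ℓi} − 2 C_{i(j} B_{k)}{}^{k} C_{ℓℓ}) + A_{ii} C_{jk}(B_{jk} C_{ℓℓ} − B_k{}^{ℓ} C_{ℓj}) − B_{ij}[B_{ij} B_{kℓ} C_{kℓ} + 2 C_{jk} B_{ki} B_{ℓℓ} + B_{jk} B_{ik} C_{ℓℓ} − (B_{jk} B_{iℓ} + B_{ik} B_{ℓj}) C_{kℓ}]. -/
import Mathlib


open Matrix

/-- 3×3 real matrices. -/
abbrev M3 := Matrix (Fin 3) (Fin 3) ℝ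

/-- Membership in SO(3). -/
def SO3 (l : M3) : Prop := lᵀ * l = 1 ∧ l.det = 1

/-- The antisymmetric matrix `W_δ` with rows `(0, δ₃, −δ₂)`, `(−δ₃, 0, δ₁)`,
`(δ₂, −δ₁, 0)`. -/
def Wmat (δ : Fin 3 → ℝ) : M3 :=
  !![0, δ 2, -δ 1; -δ 2, 0, δ 0; δ 1, -δ 0, 0]

/-- Transformed parameter `Ã = λᵀAλ + λᵀBμ + μᵀBᵀλ + μᵀCμ`, with `μ = W_δ λ`. -/
def tA (A B C l : M3) (δ : Fin 3 → ℝ) : M3 :=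
  lᵀ * A * l + lᵀ * B * (Wmat δ * l) + (Wmat δ * l)ᵀ * Bᵀ * l
    + (Wmat δ * l)ᵀ * C * (Wmat δ * l)

/-- Transformed parameter `B̃ = λᵀBλ + μᵀCλ`, with `μ = W_δ λ`. -/
def tB (B C l : M3) (δ : Fin 3 → ℝ) : M3 :=
  lᵀ * B * l + (Wmat δ * l)ᵀ * C * l

/-- Transformed parameter `C̃ = λᵀCλ`. -/
def tC (C l : M3) : M3 := lᵀ * C * l

/-- The Levi-Civita symbol on `Fin 3`. -/
noncomputable def eps (i j k : Fin 3) : ℝ :=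
  (((i : ℕ) : ℝ) - ((j : ℕ) : ℝ)) * (((j : ℕ) : ℝ) - ((k : ℕ) : ℝ))
    * (((k : ℕ) : ℝ) - ((i : ℕ) : ℝ)) / 2

/-- The ε-term `ε_{iℓm} ε_{jkp} B_{ij} B_{kℓ} C_{mn} C_{np}`. -/
noncomputable def epsBBCC (B C : M3) : ℝ :=
  ∑ i : Fin 3, ∑ l : Fin 3, ∑ m : Fin 3, ∑ j : Fin 3, ∑ k : Fin 3, ∑ p : Fin 3,
    ∑ n : Fin 3, eps i l m * eps j k p * B i j * B k l * C m n * C n p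

/-- `Δ₁₁`, where `C_{[k}{}^{ℓ}B_{ℓ]i} = ½(C_{kℓ}B_{ℓi} − C_{ℓℓ}B_{ki})` and
`C_k{}^{[k}C_ℓ{}^{ℓ]} = ½((tr C)² − tr C²)`. -/
noncomputable def Delta11 (A B C : M3) : ℝ :=
  epsBBCC B C
    + (∑ i : Fin 3, ∑ j : Fin 3, B i j *
        (B i j * (∑ k : Fin 3, ∑ l : Fin 3, C k l * C k l)
          - ∑ k : Fin 3, C j k *
              ((∑ l : Fin 3, C k l * B i l)
                + 4 * (((1 : ℝ) / 2) *
                    ((∑ l : Fin 3, C k l * B l i) - C.trace * B k i)))))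
    + (∑ i : Fin 3, ∑ j : Fin 3, A i j * C i j)
        * (((1 : ℝ) / 2) * (C.trace ^ 2 - (C * C).trace))

/-- `Δ₁₂`. -/
noncomputable def Delta12 (A B C : M3) : ℝ :=
  A.trace * ((C.trace * C.trace
        + 3 * ∑ j : Fin 3, ∑ k : Fin 3, C j k * C j k) * C.trace
      - 4 * ∑ j : Fin 3, ∑ k : Fin 3, ∑ l : Fin 3, C j k * C k l * C l j)
    - 6 * (∑ i : Fin 3, ∑ j : Fin 3, A i j * C i j)
        * (∑ k : Fin 3, ∑ l : Fin 3, C k l * C k l)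
    + 6 * (∑ i : Fin 3, ∑ j : Fin 3, B i j *
        (B i j * (∑ k : Fin 3, ∑ l : Fin 3, C k l * C k l)
          - ∑ k : Fin 3, C j k *
              ((B i k - 2 * B k i) * C.trace + 4 * ∑ l : Fin 3, C k l * B l i)))
    + 12 * epsBBCC B C

/-- `Δ₁₃`, where `C_k{}^{[k}C_ℓ{}^{ℓ]} = ½((tr C)² − tr C²)` and
`C_{i(j}B_{k)}{}^{k} = ½(C_{ij} tr B + C_{ik}B_{jk})`. -/
noncomputable def Delta13 (A B C : M3) : ℝ :=
  (∑ i : Fin 3, ∑ j : Fin 3, A i j *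
      (B i j * (((1 : ℝ) / 2) * (C.trace ^ 2 - (C * C).trace))
        + (∑ k : Fin 3, ∑ l : Fin 3, B j k * C k l * C l i)
        - 2 * (((1 : ℝ) / 2) *
            (C i j * B.trace + ∑ k : Fin 3, C i k * B j k)) * C.trace))
    + A.trace * (∑ j : Fin 3, ∑ k : Fin 3, C j k *
        (B j k * C.trace - ∑ l : Fin 3, B k l * C l j))
    - (∑ i : Fin 3, ∑ j : Fin 3, B i j *
        (B i j * (∑ k : Fin 3, ∑ l : Fin 3, B k l * C k l)
          + 2 * (∑ k : Fin 3, C j k * B k i) * B.trace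
          + (∑ k : Fin 3, B j k * B i k) * C.trace
          - ∑ k : Fin 3, ∑ l : Fin 3, (B j k * B i l + B i k * B l j) * C k l))


lemma eps_000 : eps 0 0 0 = 0 := by norm_num [eps]
lemma eps_001 : eps 0 0 1 = 0 := by norm_num [eps]
lemma eps_002 : eps 0 0 2 = 0 := by norm_num [eps]
lemma eps_010 : eps 0 1 0 = 0 := by norm_num [eps]
lemma eps_011 : eps 0 1 1 = 0 := by norm_num [eps]
lemma eps_012 : eps 0 1 2 = 1 := by norm_num [eps]
lemma eps_020 : eps 0 2 0 = 0 := by norm_num [eps]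
lemma eps_021 : eps 0 2 1 = -1 := by norm_num [eps]
lemma eps_022 : eps 0 2 2 = 0 := by norm_num [eps]
lemma eps_100 : eps 1 0 0 = 0 := by norm_num [eps]
lemma eps_101 : eps 1 0 1 = 0 := by norm_num [eps]
lemma eps_102 : eps 1 0 2 = -1 := by norm_num [eps]
lemma eps_110 : eps 1 1 0 = 0 := by norm_num [eps]
lemma eps_111 : eps 1 1 1 = 0 := by norm_num [eps]
lemma eps_112 : eps 1 1 2 = 0 := by norm_num [eps]
lemma eps_120 : eps 1 2 0 = 1 := by norm_num [eps]
lemma eps_121 : eps 1 2 1 = 0 := by norm_num [eps]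
lemma eps_122 : eps 1 2 2 = 0 := by norm_num [eps]
lemma eps_200 : eps 2 0 0 = 0 := by norm_num [eps]
lemma eps_201 : eps 2 0 1 = 1 := by norm_num [eps]
lemma eps_202 : eps 2 0 2 = 0 := by norm_num [eps]
lemma eps_210 : eps 2 1 0 = -1 := by norm_num [eps]
lemma eps_211 : eps 2 1 1 = 0 := by norm_num [eps]
lemma eps_212 : eps 2 1 2 = 0 := by norm_num [eps]
lemma eps_220 : eps 2 2 0 = 0 := by norm_num [eps]
lemma eps_221 : eps 2 2 1 = 0 := by norm_num [eps]
lemma eps_222 : eps 2 2 2 = 0 := by norm_num [eps]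

lemma Wmat_00 (δ : Fin 3 → ℝ) : Wmat δ 0 0 = 0 := by simp [Wmat]
lemma Wmat_01 (δ : Fin 3 → ℝ) : Wmat δ 0 1 = δ 2 := by simp [Wmat]
lemma Wmat_02 (δ : Fin 3 → ℝ) : Wmat δ 0 2 = -δ 1 := by simp [Wmat]
lemma Wmat_10 (δ : Fin 3 → ℝ) : Wmat δ 1 0 = -δ 2 := by simp [Wmat]
lemma Wmat_11 (δ : Fin 3 → ℝ) : Wmat δ 1 1 = 0 := by simp [Wmat]
lemma Wmat_12 (δ : Fin 3 → ℝ) : Wmat δ 1 2 = δ 0 := by simp [Wmat]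
lemma Wmat_20 (δ : Fin 3 → ℝ) : Wmat δ 2 0 = δ 1 := by simp [Wmat]
lemma Wmat_21 (δ : Fin 3 → ℝ) : Wmat δ 2 1 = -δ 0 := by simp [Wmat]
lemma Wmat_22 (δ : Fin 3 → ℝ) : Wmat δ 2 2 = 0 := by simp [Wmat]


lemma epsBBCC_eq (B C : M3) : epsBBCC B C =
    B.trace ^ 2 * (C * C).trace
      - B.trace * ((B * (C * C)ᵀ).trace + (B * (C * C)).trace)
      - (B * Bᵀ).trace * (C * C).trace
      + (Bᵀ * B * (C * C)ᵀ).trace + (B * Bᵀ * (C * C)).trace := by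
  rw [epsBBCC]
  simp only [Fin.sum_univ_three, eps_000, eps_001, eps_002, eps_010, eps_011, eps_012,
    eps_020, eps_021, eps_022, eps_100, eps_101, eps_102, eps_110, eps_111, eps_112,
    eps_120, eps_121, eps_122, eps_200, eps_201, eps_202, eps_210, eps_211, eps_212,
    eps_220, eps_221, eps_222, zero_mul, mul_zero, one_mul, neg_mul, neg_neg,
    add_zero, zero_add]
  simp only [Matrix.trace, Matrix.diag_apply, Matrix.mul_apply, Matrix.transpose_apply,
    Fin.sum_univ_three]
  ring

set_option maxHeartbeats 1000000 in
lemma Delta11_eq (A B C : M3) : Delta11 A B C =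
    (B.trace ^ 2 * (C * C).trace
      - B.trace * ((B * (C * C)ᵀ).trace + (B * (C * C)).trace)
      - (B * Bᵀ).trace * (C * C).trace
      + (Bᵀ * B * (C * C)ᵀ).trace + (B * Bᵀ * (C * C)).trace)
    + (B * Bᵀ).trace * (C * Cᵀ).trace - (B * (C * C) * Bᵀ).trace
      - 2 * (B * (C * C) * B).trace + 2 * C.trace * (B * C * B).trace
    + (A * Cᵀ).trace * (((1:ℝ)/2) * (C.trace ^ 2 - (C * C).trace)) := by
  rw [Delta11, epsBBCC_eq]
  simp only [Matrix.trace, Matrix.diag_apply, Matrix.mul_apply, Matrix.transpose_apply,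
    Fin.sum_univ_three]
  ring

set_option maxHeartbeats 1000000 in
lemma Delta12_eq (A B C : M3) : Delta12 A B C =
    A.trace * (C.trace ^ 3 + 3 * (C * Cᵀ).trace * C.trace - 4 * (C * C * C).trace)
    - 6 * (A * Cᵀ).trace * (C * Cᵀ).trace
    + 6 * ((B * Bᵀ).trace * (C * Cᵀ).trace - (B * C * Bᵀ).trace * C.trace
        + 2 * (B * C * B).trace * C.trace - 4 * (B * (C * C) * B).trace)
    + 12 * (B.trace ^ 2 * (C * C).trace
      - B.trace * ((B * (C * C)ᵀ).trace + (B * (C * C)).trace)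
      - (B * Bᵀ).trace * (C * C).trace
      + (Bᵀ * B * (C * C)ᵀ).trace + (B * Bᵀ * (C * C)).trace) := by
  rw [Delta12, epsBBCC_eq]
  simp only [Matrix.trace, Matrix.diag_apply, Matrix.mul_apply, Matrix.transpose_apply,
    Fin.sum_univ_three]
  ring

set_option maxHeartbeats 1000000 in
lemma Delta13_eq (A B C : M3) : Delta13 A B C =
    (A * Bᵀ).trace * (((1:ℝ)/2) * (C.trace ^ 2 - (C * C).trace))
    + (A * B * (C * C)).trace
    - C.trace * ((A * Cᵀ).trace * B.trace + (Aᵀ * C * Bᵀ).trace)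
    + A.trace * ((C * Bᵀ).trace * C.trace - (C * B * C).trace)
    - ((B * Bᵀ).trace * (B * Cᵀ).trace + 2 * (B * C * B).trace * B.trace
        + (B * B * Bᵀ).trace * C.trace - (B * B * C * Bᵀ).trace
        - (Bᵀ * B * C * B).trace) := by
  rw [Delta13]
  simp only [Matrix.trace, Matrix.diag_apply, Matrix.mul_apply, Matrix.transpose_apply,
    Fin.sum_univ_three]
  ring

lemma mconj_mul {l : M3} (hl2 : l * lᵀ = 1) (X Y : M3) :
    (lᵀ * X * l) * (lᵀ * Y * l) = lᵀ * (X * Y) * l := by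
  have h : ∀ Z : M3, l * (lᵀ * Z) = Z := fun Z => by
    rw [← Matrix.mul_assoc, hl2, Matrix.one_mul]
  simp only [Matrix.mul_assoc, h]

lemma mconj_trans (l X : M3) : (lᵀ * X * l)ᵀ = lᵀ * Xᵀ * l := by
  simp [Matrix.transpose_mul, Matrix.mul_assoc]

lemma mconj_trace {l : M3} (hl2 : l * lᵀ = 1) (X : M3) :
    (lᵀ * X * l).trace = X.trace := by
  rw [Matrix.trace_mul_comm, ← Matrix.mul_assoc, hl2, Matrix.one_mul]

lemma rot11 (A B C l : M3) (hl : lᵀ * l = 1) :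
    Delta11 (lᵀ * A * l) (lᵀ * B * l) (lᵀ * C * l) = Delta11 A B C := by
  have hl2 : l * lᵀ = 1 := mul_eq_one_comm.mp hl
  rw [Delta11_eq, Delta11_eq]
  simp only [mconj_trans, mconj_mul hl2, mconj_trace hl2]

lemma rot12 (A B C l : M3) (hl : lᵀ * l = 1) :
    Delta12 (lᵀ * A * l) (lᵀ * B * l) (lᵀ * C * l) = Delta12 A B C := by
  have hl2 : l * lᵀ = 1 := mul_eq_one_comm.mp hl
  rw [Delta12_eq, Delta12_eq]
  simp only [mconj_trans, mconj_mul hl2, mconj_trace hl2]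

lemma rot13 (A B C l : M3) (hl : lᵀ * l = 1) :
    Delta13 (lᵀ * A * l) (lᵀ * B * l) (lᵀ * C * l) = Delta13 A B C := by
  have hl2 : l * lᵀ = 1 := mul_eq_one_comm.mp hl
  rw [Delta13_eq, Delta13_eq]
  simp only [mconj_trans, mconj_mul hl2, mconj_trace hl2]

lemma tA_eq (A B C l : M3) (δ : Fin 3 → ℝ) :
    tA A B C l δ = lᵀ * (A + B * Wmat δ + (Wmat δ)ᵀ * Bᵀ + (Wmat δ)ᵀ * C * Wmat δ) * l := by
  rw [tA]; simp only [Matrix.transpose_mul]; noncomm_ring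

lemma tB_eq (B C l : M3) (δ : Fin 3 → ℝ) :
    tB B C l δ = lᵀ * (B + (Wmat δ)ᵀ * C) * l := by
  rw [tB]; simp only [Matrix.transpose_mul]; noncomm_ring
set_option maxHeartbeats 4000000 in
lemma trans11 (A B C : M3) (hA : A.IsSymm) (hC : C.IsSymm) (δ : Fin 3 → ℝ) :
    Delta11 (A + B * Wmat δ + (Wmat δ)ᵀ * Bᵀ + (Wmat δ)ᵀ * C * Wmat δ)
      (B + (Wmat δ)ᵀ * C) C = Delta11 A B C := by
  rw [Delta11_eq, Delta11_eq]
  simp only [Matrix.trace, Matrix.diag_apply, Matrix.mul_apply, Matrix.transpose_apply,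
    Matrix.add_apply, Fin.sum_univ_three, Wmat_00, Wmat_01, Wmat_02, Wmat_10, Wmat_11,
    Wmat_12, Wmat_20, Wmat_21, Wmat_22, hA.apply 0 1, hA.apply 0 2, hA.apply 1 2,
    hC.apply 0 1, hC.apply 0 2, hC.apply 1 2]
  ring

set_option maxHeartbeats 4000000 in
lemma trans12 (A B C : M3) (hA : A.IsSymm) (hC : C.IsSymm) (δ : Fin 3 → ℝ) :
    Delta12 (A + B * Wmat δ + (Wmat δ)ᵀ * Bᵀ + (Wmat δ)ᵀ * C * Wmat δ)
      (B + (Wmat δ)ᵀ * C) C = Delta12 A B C := by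
  rw [Delta12_eq, Delta12_eq]
  simp only [Matrix.trace, Matrix.diag_apply, Matrix.mul_apply, Matrix.transpose_apply,
    Matrix.add_apply, Fin.sum_univ_three, Wmat_00, Wmat_01, Wmat_02, Wmat_10, Wmat_11,
    Wmat_12, Wmat_20, Wmat_21, Wmat_22, hA.apply 0 1, hA.apply 0 2, hA.apply 1 2,
    hC.apply 0 1, hC.apply 0 2, hC.apply 1 2]
  ring

set_option maxHeartbeats 4000000 in
lemma trans13 (A B C : M3) (hA : A.IsSymm) (hC : C.IsSymm) (δ : Fin 3 → ℝ) :
    Delta13 (A + B * Wmat δ + (Wmat δ)ᵀ * Bᵀ + (Wmat δ)ᵀ * C * Wmat δ)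
      (B + (Wmat δ)ᵀ * C) C = Delta13 A B C := by
  rw [Delta13_eq, Delta13_eq]
  simp only [Matrix.trace, Matrix.diag_apply, Matrix.mul_apply, Matrix.transpose_apply,
    Matrix.add_apply, Fin.sum_univ_three, Wmat_00, Wmat_01, Wmat_02, Wmat_10, Wmat_11,
    Wmat_12, Wmat_20, Wmat_21, Wmat_22, hA.apply 0 1, hA.apply 0 2, hA.apply 1 2,
    hC.apply 0 1, hC.apply 0 2, hC.apply 1 2]
  ring
/-- STATEMENT 14: the fundamental invariants `Δ₁₁, Δ₁₂, Δ₁₃` of `K²(E³)` are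
invariant under the parameter transformation rules induced by `I(E³)`. -/
theorem invariants_Delta11_to_Delta13
    (A B C : M3) (hA : A.IsSymm) (hC : C.IsSymm)
    (l : M3) (hl : SO3 l) (δ : Fin 3 → ℝ) :
    Delta11 (tA A B C l δ) (tB B C l δ) (tC C l) = Delta11 A B C ∧
    Delta12 (tA A B C l δ) (tB B C l δ) (tC C l) = Delta12 A B C ∧
    Delta13 (tA A B C l δ) (tB B C l δ) (tC C l) = Delta13 A B C := by
  obtain ⟨hl1, -⟩ := hl
  rw [tA_eq, tB_eq, tC]
  exact ⟨by rw [rot11 _ _ _ _ hl1, trans11 A B C hA hC δ],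
         by rw [rot12 _ _ _ _ hl1, trans12 A B C hA hC δ],
         by rw [rot13 _ _ _ _ hl1, trans13 A B C hA hC δ]⟩
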